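/- arXiv:2508.11879 — 2 statements merged into one kernel-verified Lean document; each statement's English description precedes it below -/
import Mathlib

section
/- Let π = dom(λ) be dominant and w ≤_L π. For a pipe dream P ∈ PD(w), define the set of π-dominated positions P(π) = {p ∈ ℕ² : row(p) ≤ λ'_{π(w⁻¹(s_p))}}, where s_p is the label of the pipe exiting position p to the south. Then P(π) contains exactly λ_i positions in each row i ≥ 1. -/
open Equiv MvPolynomial

/-- A permutation of ℕ has finite support. -/
def FinSupp (w : Equiv.Perm ℕ) : Prop := {i | w i ≠ i}.Finite

/-- Inversion set Inv(w) = {(i,j) : i < j, w i > w j}. -/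
def invSet (w : Equiv.Perm ℕ) : Set (ℕ × ℕ) := {p | p.1 < p.2 ∧ w p.2 < w p.1}

/-- Co-inversion set coInv(w) = {(i,j) : i < j, w i < w j}. -/
def coinvSet (w : Equiv.Perm ℕ) : Set (ℕ × ℕ) := {p | p.1 < p.2 ∧ w p.1 < w p.2}

/-- Coxeter length ℓ(w) = |Inv(w)|. -/
noncomputable def len (w : Equiv.Perm ℕ) : ℕ := (invSet w).ncard

/-- Cover relation of left weak order: u = s_k * w with ℓ(u) = ℓ(w) + 1. -/
def WeakCover (w u : Equiv.Perm ℕ) : Prop :=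
  ∃ k, u = Equiv.swap k (k + 1) * w ∧ len u = len w + 1

/-- Left weak order: reflexive-transitive closure of weak covers. -/
def leL (w u : Equiv.Perm ℕ) : Prop := Relation.ReflTransGen WeakCover w u

/-- π avoids the pattern 132 (π is dominant). -/
def Avoids132 (π : Equiv.Perm ℕ) : Prop :=
  ¬ ∃ a b c : ℕ, a < b ∧ b < c ∧ π a < π c ∧ π c < π b

/-- Rothe diagram D(π) (0-indexed conventions). -/
def Rothe (π : Equiv.Perm ℕ) : Set (ℕ × ℕ) := {p | p.1 < π⁻¹ p.2 ∧ p.2 < π p.1}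

/-- Young diagram of a partition (0-indexed): row i has l i cells. -/
def yd (l : ℕ → ℕ) : Set (ℕ × ℕ) := {p | p.2 < l p.1}

/-- Conjugate partition (0-indexed): column j has |{i : l i > j}| cells. -/
noncomputable def conjPart (l : ℕ → ℕ) (j : ℕ) : ℕ := {i | j < l i}.ncard

/-- A pipe dream: a finite set of crossing tiles together with the (uniquely
determined) labels of the pipes on the four edges of each tile.  At a cross
tile the pipes pass straight through; at a bump tile the pipe from the north
exits west and the pipe from the east exits south.  Pipe j enters the quadrant
at the north edge of column j. -/
structure PipeDream where
  cross : Finset (ℕ × ℕ)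
  north : ℕ × ℕ → ℕ
  east : ℕ × ℕ → ℕ
  south : ℕ × ℕ → ℕ
  west : ℕ × ℕ → ℕ
  north_top : ∀ j, north (0, j) = j
  north_succ : ∀ i j, north (i + 1, j) = south (i, j)
  east_eq : ∀ i j, east (i, j) = west (i, j + 1)
  south_cross : ∀ p ∈ cross, south p = north p
  west_cross : ∀ p ∈ cross, west p = east p
  south_bump : ∀ p, p ∉ cross → south p = east p
  west_bump : ∀ p, p ∉ cross → west p = north p

namespace PipeDream

/-- Pipes a and b cross at position p. -/
def CrossAt (P : PipeDream) (a b : ℕ) (p : ℕ × ℕ) : Prop :=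
  p ∈ P.cross ∧ ({P.north p, P.east p} : Set ℕ) = {a, b}

/-- A pipe dream is reduced if no two pipes cross more than once. -/
def Reduced (P : PipeDream) : Prop :=
  ∀ a b p q, P.CrossAt a b p → P.CrossAt a b q → p = q

/-- P is a pipe dream for the permutation w: pipe a exits on the west edge at
row w⁻¹(a), i.e. the one-line notation read along the west edge is w. -/
def IsFor (P : PipeDream) (w : Equiv.Perm ℕ) : Prop := ∀ i, P.west (i, 0) = w i

/-- Pipe k passes through the tile p. -/
def OnPipe (P : PipeDream) (k : ℕ) (p : ℕ × ℕ) : Prop := P.north p = k ∨ P.east p = k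

/-- p lies weakly northwest of pipe k. -/
def NWOfPipe (P : PipeDream) (k : ℕ) (p : ℕ × ℕ) : Prop :=
  ∃ q, P.OnPipe k q ∧ p.1 ≤ q.1 ∧ p.2 ≤ q.2

end PipeDream

/-- The set of reduced pipe dreams for w. -/
def PD (w : Equiv.Perm ℕ) : Set PipeDream := {P | P.Reduced ∧ P.IsFor w}

/-- The set of π-dominated positions of a pipe dream P ∈ PD(w), where π is the
dominant permutation with Rothe diagram the Young diagram of l:
row(p) < λ'(π(w⁻¹(s_p))) (0-indexed), s_p being the pipe exiting p south. -/
noncomputable def dominated (π : Equiv.Perm ℕ) (l : ℕ → ℕ) (w : Equiv.Perm ℕ)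
    (P : PipeDream) : Set (ℕ × ℕ) :=
  {p | p.1 < conjPart l (π (w⁻¹ (P.south p)))}

/-- The Schubert polynomial as the pipe dream generating function. -/
noncomputable def Schub (w : Equiv.Perm ℕ) : MvPolynomial ℕ ℤ :=
  ∑ᶠ P ∈ PD w, ∏ p ∈ P.cross, X p.1

/-- The polynomial ring ℤ[x;y]: x-variables are `Sum.inl i`, y-variables `Sum.inr i`. -/
abbrev PolyXY := MvPolynomial (ℕ ⊕ ℕ) ℤ

/-- The field of rational functions in the x- and y-variables. -/
noncomputable abbrev RatXY := FractionRing PolyXY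

noncomputable def Xv (i : ℕ) : RatXY := algebraMap PolyXY RatXY (X (Sum.inl i))
noncomputable def Yv (i : ℕ) : RatXY := algebraMap PolyXY RatXY (X (Sum.inr i))

/-- The π-padded Schubert polynomial 𝔖_w^π(x;y) = y^λ · 𝔖_w(x₁/y₁, x₂/y₂, …),
viewed in the field of rational functions. -/
noncomputable def padded (l : ℕ → ℕ) (w : Equiv.Perm ℕ) : RatXY :=
  (∏ᶠ i, Yv i ^ l i) * (aeval (fun i => Xv i / Yv i) (Schub w))

/-- Δ = Σ_i x_i ∂/∂y_i. -/
noncomputable def deltaOp (f : PolyXY) : PolyXY :=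
  ∑ᶠ i : ℕ, X (Sum.inl i) * pderiv (Sum.inr i) f

/-- ∇ = Σ_i y_i ∂/∂x_i. -/
noncomputable def nablaOp (f : PolyXY) : PolyXY :=
  ∑ᶠ i : ℕ, X (Sum.inr i) * pderiv (Sum.inl i) f

/-! In row `i`, the pipe leaving a tile southward comes from the north edge of the same tile
(cross) or of the next bump tile to the east (bump); this matches the north edges of the row
with its south edges, except for the pipe `w i` turning west at the first bump tile. So the south
edges of row `i` carry each pipe `k` with `i < w⁻¹ k` exactly once. Since `D(π)` is the Young
diagram of `λ`, `π m < λ_i` forces `i < m`; hence the π-dominated positions of row `i` correspond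
to the `λ_i` values `m = w⁻¹ k` with `π m < λ_i`. -/

namespace PipeDream

variable (P : PipeDream)

theorem exists_ge_notMem_cross (i j : ℕ) : ∃ m, j ≤ m ∧ (i, m) ∉ P.cross := by
  refine ⟨P.cross.sup Prod.snd + j + 1, by omega, fun h => ?_⟩
  have := Finset.le_sup (f := Prod.snd) h
  simp only at this
  omega

open scoped Classical in
/-- The column of the first bump tile of row `i` weakly east of column `j`. -/
noncomputable def nextBump (i j : ℕ) : ℕ := Nat.find (P.exists_ge_notMem_cross i j)

variable {P}

theorem le_nextBump (i j : ℕ) : j ≤ P.nextBump i j := by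
  classical exact (Nat.find_spec (P.exists_ge_notMem_cross i j)).1

theorem nextBump_notMem_cross (i j : ℕ) : (i, P.nextBump i j) ∉ P.cross := by
  classical exact (Nat.find_spec (P.exists_ge_notMem_cross i j)).2

theorem nextBump_le {i j m : ℕ} (hm : j ≤ m) (hc : (i, m) ∉ P.cross) : P.nextBump i j ≤ m := by
  classical exact Nat.find_min' (P.exists_ge_notMem_cross i j) ⟨hm, hc⟩

theorem nextBump_of_notMem_cross {i j : ℕ} (hc : (i, j) ∉ P.cross) : P.nextBump i j = j :=
  (nextBump_le le_rfl hc).antisymm (le_nextBump i j)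

theorem lt_nextBump_of_mem_cross {i j : ℕ} (hc : (i, j) ∈ P.cross) : j < P.nextBump i j :=
  (le_nextBump i j).lt_of_ne fun h => nextBump_notMem_cross i j (h ▸ hc)

theorem nextBump_of_mem_cross {i j : ℕ} (hc : (i, j) ∈ P.cross) :
    P.nextBump i j = P.nextBump i (j + 1) :=
  (nextBump_le ((Nat.le_succ j).trans (le_nextBump i (j + 1))) (nextBump_notMem_cross i _)).antisymm
    (nextBump_le (lt_nextBump_of_mem_cross hc) (nextBump_notMem_cross i j))

theorem nextBump_eq {i j m : ℕ} (hjm : j ≤ m) (hm : (i, m) ∉ P.cross)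
    (hcross : ∀ k, j ≤ k → k < m → (i, k) ∈ P.cross) : P.nextBump i j = m :=
  (nextBump_le hjm hm).antisymm <| not_lt.mp fun hlt =>
    nextBump_notMem_cross i j (hcross _ (le_nextBump i j) hlt)

theorem west_eq_north_nextBump (i j : ℕ) : P.west (i, j) = P.north (i, P.nextBump i j) := by
  by_cases hc : (i, j) ∈ P.cross
  · have hlt := lt_nextBump_of_mem_cross hc
    have hnext := nextBump_of_mem_cross hc
    rw [P.west_cross _ hc, P.east_eq, hnext, west_eq_north_nextBump i (j + 1)]
  · rw [P.west_bump _ hc, nextBump_of_notMem_cross hc]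
termination_by P.nextBump i j - j
decreasing_by omega

variable (P) in
/-- The column of the north edge in row `i` whose pipe exits south at `(i, j)`. -/
noncomputable def southSource (i j : ℕ) : ℕ :=
  if (i, j) ∈ P.cross then j else P.nextBump i (j + 1)

theorem south_eq_north_southSource (i j : ℕ) : P.south (i, j) = P.north (i, P.southSource i j) := by
  unfold southSource
  split_ifs with hc
  · rw [P.south_cross _ hc]
  · rw [P.south_bump _ hc, P.east_eq, west_eq_north_nextBump]

theorem southSource_ne_of_lt (i : ℕ) {a b : ℕ} (hab : a < b) :
    P.southSource i a ≠ P.southSource i b := by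
  unfold southSource
  by_cases hb : (i, b) ∈ P.cross <;> by_cases ha : (i, a) ∈ P.cross <;>
    simp only [ha, hb, if_true, if_false]
  · exact hab.ne
  · exact fun h => nextBump_notMem_cross i (a + 1) (h ▸ hb)
  · exact (hab.trans_le ((Nat.le_succ b).trans (le_nextBump i (b + 1)))).ne
  · exact ((nextBump_le hab hb).trans_lt ((Nat.lt_succ_self b).trans_le (le_nextBump i _))).ne

theorem southSource_injective (i : ℕ) : Function.Injective (P.southSource i) := by
  intro a b h
  rcases lt_trichotomy a b with hab | hab | hab
  · exact absurd h (southSource_ne_of_lt i hab)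
  · exact hab
  · exact absurd h.symm (southSource_ne_of_lt i hab)

theorem range_southSource (i : ℕ) : Set.range (P.southSource i) = {P.nextBump i 0}ᶜ := by
  ext m
  simp only [Set.mem_range, Set.mem_compl_iff, Set.mem_singleton_iff]
  constructor
  · rintro ⟨j, rfl⟩
    unfold southSource
    split_ifs with hc
    · exact fun h => nextBump_notMem_cross i 0 (h ▸ hc)
    · exact ((nextBump_le j.zero_le hc).trans_lt
        ((Nat.lt_succ_self j).trans_le (le_nextBump i _))).ne'
  · intro hm
    by_cases hc : (i, m) ∈ P.cross
    · exact ⟨m, if_pos hc⟩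
    have h0 : P.nextBump i 0 < m := (nextBump_le m.zero_le hc).lt_of_ne' hm
    classical
    -- the last bump tile of row `i` west of column `m`
    set j := Nat.findGreatest (fun k => (i, k) ∉ P.cross) (m - 1)
    have hj : (i, j) ∉ P.cross :=
      Nat.findGreatest_spec (P := fun k => (i, k) ∉ P.cross) (by omega) (nextBump_notMem_cross i 0)
    have hjm : j ≤ m - 1 := Nat.findGreatest_le _
    refine ⟨j, ?_⟩
    rw [southSource, if_neg hj]
    refine nextBump_eq (by omega) hc fun k hk hkm => ?_
    exact not_not.mp (Nat.findGreatest_is_greatest (P := fun k => (i, k) ∉ P.cross) hk (by omega))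

theorem north_row_injective (i : ℕ) : Function.Injective fun j => P.north (i, j) := by
  induction i with
  | zero => intro a b h; simpa [P.north_top] using h
  | succ i ih =>
    intro a b h
    simp only [P.north_succ, south_eq_north_southSource] at h
    exact southSource_injective i (ih h)

theorem range_north_row {w : Equiv.Perm ℕ} (hw : P.IsFor w) (i : ℕ) :
    Set.range (fun j => P.north (i, j)) = (w '' Set.Iio i)ᶜ := by
  induction i with
  | zero => simp [P.north_top]
  | succ i ih =>
    have hrow : (fun j => P.north (i + 1, j)) = (fun j => P.north (i, j)) ∘ P.southSource i := by
      funext j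
      exact (P.north_succ i j).trans (south_eq_north_southSource i j)
    have hexit : P.north (i, P.nextBump i 0) = w i := (west_eq_north_nextBump i 0).symm.trans (hw i)
    rw [hrow, Set.range_comp, range_southSource,
      Set.image_compl_eq_range_sdiff_image (north_row_injective i), ih, Set.image_singleton, hexit]
    ext k
    simp only [Set.mem_sdiff, Set.mem_compl_iff, Set.mem_image, Set.mem_Iio, Set.mem_singleton_iff]
    constructor
    · rintro ⟨hk, hki⟩ ⟨a, ha, rfl⟩
      rcases Nat.lt_succ_iff_lt_or_eq.mp ha with ha | rfl
      exacts [hk ⟨a, ha, rfl⟩, hki rfl]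
    · intro hk
      exact ⟨fun ⟨a, ha, he⟩ => hk ⟨a, by omega, he⟩, fun he => hk ⟨i, by omega, he.symm⟩⟩

end PipeDream

theorem lt_conjPart_iff {l : ℕ → ℕ} (hl : Antitone l) (hsupp : (Function.support l).Finite)
    {i m : ℕ} : i < conjPart l m ↔ m < l i := by
  constructor
  · intro h
    by_contra! hli
    have hsub : {r | m < l r} ⊆ Set.Iio i := fun r hr =>
      lt_of_not_ge fun hir => (hl hir).not_gt (hli.trans_lt hr)
    have := Set.ncard_le_ncard hsub (Set.finite_Iio i)
    rw [Set.ncard_Iio_nat] at this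
    exact (h.trans_le this).false
  · intro h
    have hfin : {r | m < l r}.Finite :=
      hsupp.subset fun r hr => Nat.pos_iff_ne_zero.mp (m.zero_le.trans_lt hr)
    have hsub : Set.Iio (i + 1) ⊆ {r | m < l r} := fun r hr =>
      h.trans_le (hl (Nat.lt_succ_iff.mp hr))
    simpa [conjPart] using Set.ncard_le_ncard hsub hfin

theorem lt_of_apply_lt_of_rothe_eq_yd {π : Equiv.Perm ℕ} {l : ℕ → ℕ} (hD : Rothe π = yd l)
    {i m : ℕ} (h : π m < l i) : i < m := by
  have : (i, π m) ∈ Rothe π := hD ▸ h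
  simpa [Rothe] using this.1

theorem stmt9_general (π w : Equiv.Perm ℕ) (l : ℕ → ℕ)
    (hl : Antitone l) (hsupp : (Function.support l).Finite)
    (hD : Rothe π = yd l)
    (P : PipeDream) (hP : P ∈ PD w) (i : ℕ) :
    {p ∈ dominated π l w P | p.1 = i}.ncard = l i := by
  set U : Set ℕ := ⇑(π * w⁻¹) ⁻¹' Set.Iio (l i)
  have hrow : {p ∈ dominated π l w P | p.1 = i} =
      Prod.mk i '' ((fun j => P.north (i + 1, j)) ⁻¹' U) := by
    ext ⟨a, b⟩
    simp only [dominated, lt_conjPart_iff hl hsupp, Set.mem_image, Set.mem_preimage,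
      Prod.mk.injEq, P.north_succ]
    constructor
    · rintro ⟨h, rfl : a = i⟩
      exact ⟨b, h, rfl, rfl⟩
    · rintro ⟨_, h, rfl, rfl⟩
      exact ⟨h, rfl⟩
  have hU : U ⊆ Set.range fun j => P.north (i + 1, j) := by
    rw [P.range_north_row hP.2]
    rintro k hk ⟨m, hm, rfl⟩
    have := lt_of_apply_lt_of_rothe_eq_yd hD (by simpa [U] using hk)
    simp only [Set.mem_Iio] at hm
    omega
  rw [hrow, Set.ncard_image_of_injective _ (Prod.mk_right_injective i),
    Set.ncard_preimage_of_injective_subset_range (P.north_row_injective _) hU,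
    Set.ncard_preimage_of_injective_subset_range (π * w⁻¹).injective (by simp),
    Set.ncard_Iio_nat]

/-- for P ∈ PD(w) with w ≤_L π = dom(λ), the set P(π) of
π-dominated positions contains exactly λ_i positions in each row i. -/
theorem stmt9 (π w : Equiv.Perm ℕ) (l : ℕ → ℕ) (hπ : FinSupp π)
    (hdom : Avoids132 π) (hl : Antitone l) (hsupp : (Function.support l).Finite)
    (hD : Rothe π = yd l) (hw : leL w π)
    (P : PipeDream) (hP : P ∈ PD w) (i : ℕ) :
    {p ∈ dominated π l w P | p.1 = i}.ncard = l i :=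
  stmt9_general π w l hl hsupp hD P hP i
end

section
/- Let P be a reduced pipe dream for w and p a bump tile of P such that the pipe exiting p south has smaller label than the pipe exiting p west (s_p < w_p). Then for any dominant permutation π with w ≤_L π, the position p is π-dominated: row(p) ≤ λ'_{π(w⁻¹(s_p))}. -/
open Equiv MvPolynomial

/-!
At a bump tile `p = (i, j)` the pipe `t = w_p` enters from the north and `s = s_p` from the east,
so at the top of row `i` pipe `s` lies east of pipe `t`, although it starts west of it (`s < t`):
the two pipes cross in a row above `i`. If `s` exited no lower than `t`, then at its exit row `s`
would have to get back west of `t`, a second crossing, at or below row `i`, which a reduced pipe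
dream forbids. Hence `(w⁻¹ t, w⁻¹ s)` is an inversion of `w`, so of `π`, which puts the cell
`(w⁻¹ t, π (w⁻¹ s))` into the Rothe diagram of `π`, the Young diagram of `λ`; as `i ≤ w⁻¹ t`,
the whole column `π (w⁻¹ s)` of `λ` reaches below row `i`.
-/

theorem Nat.exists_not_and_succ_of_le {p : ℕ → Prop} {a b : ℕ} (hab : a ≤ b) (ha : ¬ p a)
    (hb : p b) : ∃ n, a ≤ n ∧ n < b ∧ ¬ p n ∧ p (n + 1) := by
  induction b, hab using Nat.le_induction with
  | base => exact absurd hb ha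
  | succ b hab ih =>
    by_cases h : p b
    · obtain ⟨n, han, hnb, hn⟩ := ih h
      exact ⟨n, han, hnb.trans b.lt_succ_self, hn⟩
    · exact ⟨b, hab, b.lt_succ_self, h, hb⟩

section WeakOrder

variable {w u : Perm ℕ} {k : ℕ}

theorem invSet_swap_mul_of_lt (h : w⁻¹ k < w⁻¹ (k + 1)) :
    invSet (swap k (k + 1) * w) = insert (w⁻¹ k, w⁻¹ (k + 1)) (invSet w) := by
  ext ⟨i, j⟩
  have hi : i = w⁻¹ k ↔ w i = k := Perm.eq_inv_iff_eq
  have hi' : i = w⁻¹ (k + 1) ↔ w i = k + 1 := Perm.eq_inv_iff_eq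
  have hj : j = w⁻¹ k ↔ w j = k := Perm.eq_inv_iff_eq
  have hj' : j = w⁻¹ (k + 1) ↔ w j = k + 1 := Perm.eq_inv_iff_eq
  simp only [invSet, Set.mem_ofPred_eq, Set.mem_insert_iff, Prod.mk.injEq, Perm.mul_apply,
    swap_apply_def]
  split_ifs <;> omega

theorem len_swap_mul_of_lt (h : w⁻¹ k < w⁻¹ (k + 1)) (hfin : (invSet w).Finite) :
    len (swap k (k + 1) * w) = len w + 1 := by
  rw [len, len, invSet_swap_mul_of_lt h, Set.ncard_insert_of_notMem _ hfin]
  simp [invSet]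

theorem invSet_subset_of_weakCover (h : WeakCover w u) : invSet w ⊆ invSet u := by
  obtain ⟨k, rfl, hlen⟩ := h
  rcases lt_or_gt_of_ne (w⁻¹.injective.ne k.succ_ne_self.symm) with hlt | hgt
  · rw [invSet_swap_mul_of_lt hlt]
    exact Set.subset_insert _ _
  · -- otherwise `w` itself would be obtained from `swap k (k + 1) * w` by a length-increasing swap
    set u := swap k (k + 1) * w
    have hu : u⁻¹ k < u⁻¹ (k + 1) := by simpa [u] using hgt
    have hfin : (invSet u).Finite := Set.finite_of_ncard_pos (by rw [← len, hlen]; omega)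
    have hlen' := len_swap_mul_of_lt hu hfin
    rw [show swap k (k + 1) * u = w by simp [u, ← mul_assoc]] at hlen'
    omega

theorem invSet_subset_of_leL (h : leL w u) : invSet w ⊆ invSet u := by
  induction h with
  | refl => exact subset_rfl
  | tail _ hcov ih => exact ih.trans (invSet_subset_of_weakCover hcov)

end WeakOrder

section Partition

variable {l : ℕ → ℕ}

theorem lt_conjPart_of_lt (hl : Antitone l) (hsupp : (Function.support l).Finite) {a j : ℕ}
    (h : j < l a) : a < conjPart l j := by
  have hfin : {i | j < l i}.Finite := hsupp.subset fun i hi => by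
    simp only [Set.mem_ofPred_eq] at hi
    simp only [Function.mem_support]
    omega
  calc a < (Set.Iic a).ncard := by simp
    _ ≤ conjPart l j := Set.ncard_le_ncard (fun i hi => h.trans_le (hl hi)) hfin

theorem lt_conjPart_of_mem_invSet (hl : Antitone l) (hsupp : (Function.support l).Finite)
    {π : Perm ℕ} (hD : Rothe π = yd l) {a b : ℕ} (h : (a, b) ∈ invSet π) :
    a < conjPart l (π b) := by
  have hR : (a, π b) ∈ Rothe π := ⟨by simpa using h.1, h.2⟩
  rw [hD] at hR
  exact lt_conjPart_of_lt hl hsupp hR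

end Partition

namespace PipeDream

inductive Edge
  | north (r c : ℕ)
  | west (r c : ℕ)

namespace Edge

/-- A pipe meets the north edges of row `r`, then the west edges of row `r`, then row `r + 1`. -/
def height : Edge → ℕ
  | north r _ => 2 * r
  | west r _ => 2 * r + 1

def col : Edge → ℕ
  | north _ c => c
  | west _ c => c

end Edge

variable (P : PipeDream)

def label : Edge → ℕ
  | .north r c => P.north (r, c)
  | .west r c => P.west (r, c)

/-- The edge through which a pipe leaves the tile it enters through `e`. -/
def next : Edge → Edge
  | .north r c => if (r, c) ∈ P.cross then .north (r + 1) c else .west r c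
  | .west r 0 => .west r 0
  | .west r (c + 1) => if (r, c) ∈ P.cross then .west r c else .north (r + 1) c

def prev : Edge → Edge
  | .north 0 c => .north 0 c
  | .north (r + 1) c => if (r, c) ∈ P.cross then .north r c else .west r (c + 1)
  | .west r c => if (r, c) ∈ P.cross then .west r (c + 1) else .north r c

/-- Decreases along `prev`: going back east is only possible through crosses, which are
finitely many. -/
def backRank : Edge → ℕ
  | .north r c => 2 * r + (P.cross.filter fun q => c ≤ q.2).card
  | .west r c => 2 * r + (P.cross.filter fun q => c ≤ q.2).card + 1

def trace (k n : ℕ) : Edge := P.next^[n] (.north 0 k)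

theorem label_next (e : Edge) : P.label (P.next e) = P.label e := by
  cases e with
  | north r c =>
    by_cases h : (r, c) ∈ P.cross
    · simp [next, label, h, P.north_succ, P.south_cross]
    · simp [next, label, h, P.west_bump]
  | west r c =>
    cases c with
    | zero => rfl
    | succ c =>
      by_cases h : (r, c) ∈ P.cross
      · simp [next, label, h, P.west_cross, P.east_eq]
      · simp [next, label, h, P.north_succ, P.south_bump, P.east_eq]

theorem label_prev (e : Edge) : P.label (P.prev e) = P.label e := by
  cases e with
  | north r c =>
    cases r with
    | zero => rfl
    | succ r =>
      by_cases h : (r, c) ∈ P.cross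
      · simp [prev, label, h, P.north_succ, P.south_cross]
      · simp [prev, label, h, P.north_succ, P.south_bump, P.east_eq]
  | west r c =>
    by_cases h : (r, c) ∈ P.cross
    · simp [prev, label, h, P.west_cross, P.east_eq]
    · simp [prev, label, h, P.west_bump]

theorem next_prev {e : Edge} (he : ∀ c, e ≠ .north 0 c) : P.next (P.prev e) = e := by
  cases e with
  | north r c =>
    cases r with
    | zero => exact absurd rfl (he c)
    | succ r => by_cases h : (r, c) ∈ P.cross <;> simp [prev, next, h]
  | west r c => by_cases h : (r, c) ∈ P.cross <;> simp [prev, next, h]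

theorem backRank_prev_lt {e : Edge} (he : ∀ c, e ≠ .north 0 c) :
    P.backRank (P.prev e) < P.backRank e := by
  have hle : ∀ c, (P.cross.filter fun q => c + 1 ≤ q.2).card ≤
      (P.cross.filter fun q => c ≤ q.2).card := fun c =>
    Finset.card_le_card (Finset.monotone_filter_right _ fun q h => by omega)
  cases e with
  | north r c =>
    cases r with
    | zero => exact absurd rfl (he c)
    | succ r =>
      have := hle c
      by_cases h : (r, c) ∈ P.cross <;> simp only [prev, backRank, h, ↓reduceIte] <;> omega
  | west r c =>
    by_cases h : (r, c) ∈ P.cross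
    · have hlt : (P.cross.filter fun q => c + 1 ≤ q.2).card <
          (P.cross.filter fun q => c ≤ q.2).card :=
        Finset.card_lt_card ⟨Finset.monotone_filter_right _ fun q h => by omega,
          fun hsub => by
            simpa using (Finset.mem_filter.mp (hsub (Finset.mem_filter.mpr ⟨h, le_rfl⟩))).2⟩
      simp only [prev, backRank, h, ↓reduceIte]
      omega
    · simp only [prev, backRank, h, ↓reduceIte]
      omega

theorem trace_succ (k n : ℕ) : P.trace k (n + 1) = P.next (P.trace k n) :=
  Function.iterate_succ_apply' _ _ _

theorem label_trace (k n : ℕ) : P.label (P.trace k n) = k := by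
  induction n with
  | zero => simp [trace, label, P.north_top]
  | succ n ih => rw [trace_succ, label_next, ih]

theorem exists_trace_eq (e : Edge) : ∃ n, P.trace (P.label e) n = e := by
  generalize hm : P.backRank e = m
  induction m using Nat.strong_induction_on generalizing e with
  | _ m ih =>
    by_cases he : ∀ c, e ≠ .north 0 c
    · obtain ⟨n, hn⟩ := ih _ (hm ▸ P.backRank_prev_lt he) (P.prev e) rfl
      rw [label_prev] at hn
      exact ⟨n + 1, by rw [trace_succ, hn, P.next_prev he]⟩
    · obtain ⟨c, rfl⟩ := not_forall_not.mp he
      exact ⟨0, by simp [trace, label, P.north_top]⟩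

theorem height_le_next (e : Edge) : e.height ≤ (P.next e).height := by
  cases e with
  | north r c => by_cases h : (r, c) ∈ P.cross <;> simp [next, Edge.height, h]
  | west r c =>
    cases c with
    | zero => rfl
    | succ c => by_cases h : (r, c) ∈ P.cross <;> simp [next, Edge.height, h]

theorem col_next_le (e : Edge) : (P.next e).col ≤ e.col := by
  cases e with
  | north r c => by_cases h : (r, c) ∈ P.cross <;> simp [next, Edge.col, h]
  | west r c =>
    cases c with
    | zero => rfl
    | succ c => by_cases h : (r, c) ∈ P.cross <;> simp [next, Edge.col, h]

theorem height_lt_of_next_eq_north {e : Edge} {r c : ℕ} (he : P.next e = .north r c) :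
    e.height < 2 * r := by
  cases e with
  | north r' c' =>
    by_cases h : (r', c') ∈ P.cross <;> simp [next, h] at he
    simp [Edge.height, ← he.1]
  | west r' c' =>
    cases c' with
    | zero => simp [next] at he
    | succ c' =>
      by_cases h : (r', c') ∈ P.cross <;> simp [next, h] at he
      simp [Edge.height, ← he.1]
      omega

theorem exists_next_eq_north {e : Edge} {r : ℕ} (h : e.height < 2 * r)
    (h' : 2 * r ≤ (P.next e).height) : ∃ c, P.next e = .north r c := by
  cases e with
  | north r' c' =>
    by_cases hc : (r', c') ∈ P.cross <;> simp [next, Edge.height, hc] at h h' ⊢ <;> omega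
  | west r' c' =>
    cases c' with
    | zero => simp [next] at h'; omega
    | succ c' =>
      by_cases hc : (r', c') ∈ P.cross <;> simp [next, Edge.height, hc] at h h' ⊢ <;> omega

theorem monotone_height_trace (k : ℕ) : Monotone fun n => (P.trace k n).height :=
  monotone_nat_of_le_succ fun n => by rw [trace_succ]; exact P.height_le_next _

theorem antitone_col_trace (k : ℕ) : Antitone fun n => (P.trace k n).col :=
  antitone_nat_of_succ_le fun n => by rw [trace_succ]; exact P.col_next_le _

/-- A north edge of a pipe is met only after all of the pipe's edges lying higher. -/
theorem col_le_of_trace_eq_north {k n m r c : ℕ} (hn : P.trace k n = .north r c)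
    (h : 2 * r ≤ (P.trace k m).height) : (P.trace k m).col ≤ c := by
  rcases le_or_gt n m with hnm | hmn
  · simpa [hn, Edge.col] using P.antitone_col_trace k hnm
  · obtain ⟨n, rfl⟩ : ∃ n', n = n' + 1 := Nat.exists_eq_succ_of_ne_zero (by omega)
    have h₁ := P.height_lt_of_next_eq_north (by rw [← trace_succ, hn])
    have h₂ := P.monotone_height_trace k (Nat.le_of_lt_succ hmn)
    simp only at h₂
    omega

theorem exists_trace_eq_north {k r c : ℕ} (h : P.north (r, c) = k) :
    ∃ n, P.trace k n = .north r c := by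
  simpa [label, h] using P.exists_trace_eq (.north r c)

theorem col_le_of_north_eq {k r r' c c' : ℕ} (h : P.north (r, c) = k)
    (h' : P.north (r', c') = k) (hr : r ≤ r') : c' ≤ c := by
  obtain ⟨n, hn⟩ := P.exists_trace_eq_north h
  obtain ⟨m, hm⟩ := P.exists_trace_eq_north h'
  simpa [hm, Edge.col] using
    P.col_le_of_trace_eq_north (m := m) hn (by simp [hm, Edge.height]; omega)

theorem col_eq_of_north_eq {k r c c' : ℕ} (h : P.north (r, c) = k)
    (h' : P.north (r, c') = k) : c = c' :=
  le_antisymm (P.col_le_of_north_eq h' h le_rfl) (P.col_le_of_north_eq h h' le_rfl)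

theorem le_col_of_west_eq {k r c c' : ℕ} (h : P.north (r, c) = k) (h' : P.west (r, c') = k) :
    c' ≤ c := by
  obtain ⟨n, hn⟩ := P.exists_trace_eq_north h
  obtain ⟨m, hm⟩ : ∃ m, P.trace k m = .west r c' := by
    simpa [label, h'] using P.exists_trace_eq (.west r c')
  simpa [hm, Edge.col] using P.col_le_of_trace_eq_north (m := m) hn (by simp [hm, Edge.height])

theorem east_eq_of_east_eq_add {k r c : ℕ} (hno : ∀ x, c ≤ x → P.south (r, x) ≠ k) (n : ℕ)
    (h : P.east (r, c + n) = k) : P.east (r, c) = k := by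
  induction n with
  | zero => exact h
  | succ n ih =>
    rw [← add_assoc] at h
    have hx : (r, c + n + 1) ∈ P.cross := by
      by_contra hx
      exact hno (c + n + 1) (by omega) (by rw [P.south_bump _ hx, h])
    exact ih (by rw [P.east_eq, P.west_cross _ hx, h])

/-- Pipe `k` is forced west along row `r`, through crosses, at least up to column `c`. -/
theorem crossAt_of_north_eq {k r b c : ℕ} (hb : P.north (r, b) = k) (hcb : c < b)
    (hno : ∀ x, c ≤ x → P.north (r + 1, x) ≠ k) : P.CrossAt (P.north (r, c)) k (r, c) := by
  have hno' : ∀ x, c ≤ x → P.south (r, x) ≠ k := fun x hx => by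
    rw [← P.north_succ]
    exact hno x hx
  obtain ⟨n, rfl⟩ : ∃ n, b = c + n + 1 := ⟨b - c - 1, by omega⟩
  have hbump : (r, c + n + 1) ∉ P.cross := fun hx =>
    hno' (c + n + 1) (by omega) (by rw [P.south_cross _ hx, hb])
  have heast : P.east (r, c) = k :=
    P.east_eq_of_east_eq_add hno' n (by rw [P.east_eq, P.west_bump _ hbump, hb])
  have hcross : (r, c) ∈ P.cross := by
    by_contra hx
    exact hno' c le_rfl (by rw [P.south_bump _ hx, heast])
  exact ⟨hcross, by rw [heast]⟩

theorem crossAt_comm {a b : ℕ} {p : ℕ × ℕ} : P.CrossAt a b p ↔ P.CrossAt b a p := by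
  simp [CrossAt, Set.pair_comm]

def WestOf (r a b : ℕ) : Prop := ∃ c d, c < d ∧ P.north (r, c) = a ∧ P.north (r, d) = b

theorem WestOf.not_westOf {r a b : ℕ} (h : P.WestOf r a b) : ¬ P.WestOf r b a := by
  obtain ⟨c, d, hcd, hc, hd⟩ := h
  rintro ⟨d', c', hdc', hd', hc'⟩
  have := P.col_eq_of_north_eq hc hc'
  have := P.col_eq_of_north_eq hd hd'
  omega

theorem exists_crossAt_of_westOf_of_westOf {r a b : ℕ} (h : P.WestOf r a b)
    (h' : P.WestOf (r + 1) b a) : ∃ c, P.CrossAt a b (r, c) := by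
  obtain ⟨c, d, hcd, hc, hd⟩ := h
  obtain ⟨d', c', hdc', hd', hc'⟩ := h'
  have hcross := P.crossAt_of_north_eq hd (c := c')
    (by have := P.col_le_of_north_eq hc hc' r.le_succ; omega)
    fun x hx hxb => by have := P.col_eq_of_north_eq hxb hd'; omega
  have hnorth : P.north (r, c') = a := by
    rw [← P.south_cross _ hcross.1, ← P.north_succ, hc']
  exact ⟨c', hnorth ▸ hcross⟩

variable {P} {w : Perm ℕ}

theorem exists_trace_eq_exit (hfor : P.IsFor w) (k : ℕ) :
    ∃ N, P.trace k N = .west (w⁻¹ k) 0 := by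
  have hk : P.label (.west (w⁻¹ k) 0) = k := (hfor _).trans (w.apply_symm_apply k)
  simpa only [hk] using P.exists_trace_eq (.west (w⁻¹ k) 0)

theorem height_trace_le (hfor : P.IsFor w) (k n : ℕ) :
    (P.trace k n).height ≤ 2 * w⁻¹ k + 1 := by
  obtain ⟨N, hN⟩ := exists_trace_eq_exit hfor k
  rcases le_total n N with h | h
  · simpa [hN, Edge.height] using P.monotone_height_trace k h
  · obtain ⟨d, rfl⟩ := Nat.exists_eq_add_of_le h
    rw [trace, add_comm, Function.iterate_add_apply, ← trace, hN,
      Function.iterate_fixed (rfl : P.next (.west (w⁻¹ k) 0) = _)]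
    simp [Edge.height]

theorem le_of_north_eq (hfor : P.IsFor w) {k r c : ℕ} (h : P.north (r, c) = k) :
    r ≤ w⁻¹ k := by
  obtain ⟨n, hn⟩ := P.exists_trace_eq_north h
  have := height_trace_le hfor k n
  simp only [hn, Edge.height] at this
  omega

theorem exists_north_eq (hfor : P.IsFor w) {k r : ℕ} (hr : r ≤ w⁻¹ k) :
    ∃ c, P.north (r, c) = k := by
  rcases r.eq_zero_or_pos with rfl | hr₀
  · exact ⟨k, P.north_top k⟩
  obtain ⟨N, hN⟩ := exists_trace_eq_exit hfor k
  obtain ⟨n, -, -, hlt, hge⟩ := Nat.exists_not_and_succ_of_le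
    (p := fun n => 2 * r ≤ (P.trace k n).height) N.zero_le
    (by simp [trace, Edge.height]; omega) (by simp only [hN, Edge.height]; omega)
  rw [trace_succ] at hge
  obtain ⟨c, hc⟩ := P.exists_next_eq_north (not_le.mp hlt) hge
  have hlabel := P.label_trace k (n + 1)
  rw [trace_succ, hc] at hlabel
  exact ⟨c, hlabel⟩

theorem exists_crossAt_of_westOf_of_exit (hfor : P.IsFor w) {r a b : ℕ} (h : P.WestOf r a b)
    (hb : w⁻¹ b = r) : ∃ c, P.CrossAt a b (r, c) := by
  obtain ⟨c, d, hcd, hc, hd⟩ := h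
  refine ⟨c, hc ▸ P.crossAt_of_north_eq hd hcd fun x _ hx => ?_⟩
  have := le_of_north_eq hfor hx
  omega

theorem westOf_or_westOf (hfor : P.IsFor w) {r a b : ℕ} (hab : a ≠ b) (ha : r ≤ w⁻¹ a)
    (hb : r ≤ w⁻¹ b) : P.WestOf r a b ∨ P.WestOf r b a := by
  obtain ⟨c, hc⟩ := exists_north_eq hfor ha
  obtain ⟨d, hd⟩ := exists_north_eq hfor hb
  rcases lt_trichotomy c d with h | rfl | h
  · exact .inl ⟨c, d, h, hc, hd⟩
  · exact absurd (hc.symm.trans hd) hab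
  · exact .inr ⟨d, c, h, hd, hc⟩

theorem exists_crossAt_of_westOf_of_westOf_of_le (hfor : P.IsFor w) {r₀ r₁ a b : ℕ}
    (hab : a ≠ b) (h₀ : P.WestOf r₀ a b) (h₁ : P.WestOf r₁ b a) (hr : r₀ ≤ r₁)
    (ha : r₁ ≤ w⁻¹ a) (hb : r₁ ≤ w⁻¹ b) : ∃ r c, r₀ ≤ r ∧ r < r₁ ∧ P.CrossAt a b (r, c) := by
  obtain ⟨r, hr₀, hr₁, hr, hr'⟩ :=
    Nat.exists_not_and_succ_of_le (p := fun r => P.WestOf r b a) hr h₀.not_westOf h₁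
  have hab_r := (westOf_or_westOf hfor hab (by omega) (by omega)).resolve_right hr
  obtain ⟨c, hc⟩ := P.exists_crossAt_of_westOf_of_westOf hab_r hr'
  exact ⟨r, c, hr₀, hr₁, hc⟩

theorem mem_invSet_of_south_lt_west (hred : P.Reduced) (hfor : P.IsFor w) {p : ℕ × ℕ}
    (hp : p ∉ P.cross) (h : P.south p < P.west p) :
    (w⁻¹ (P.west p), w⁻¹ (P.south p)) ∈ invSet w ∧ p.1 ≤ w⁻¹ (P.west p) := by
  obtain ⟨i, j⟩ := p
  have ht : P.north (i, j) = P.west (i, j) := (P.west_bump _ hp).symm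
  have hs : P.north (i + 1, j) = P.south (i, j) := P.north_succ i j
  have hs' : P.west (i, j + 1) = P.south (i, j) := by rw [← P.east_eq, P.south_bump _ hp]
  generalize P.south (i, j) = s at *
  generalize P.west (i, j) = t at *
  have hti := le_of_north_eq hfor ht
  have hsi := le_of_north_eq hfor hs
  refine ⟨⟨?_, by simpa using h⟩, hti⟩
  by_contra! hle
  have h₀ : P.WestOf 0 s t := ⟨s, t, h, P.north_top s, P.north_top t⟩
  have hᵢ : P.WestOf i t s := by
    obtain ⟨c, hc⟩ := exists_north_eq hfor (k := s) (r := i) (by omega)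
    exact ⟨j, c, P.le_col_of_west_eq hc hs', ht, hc⟩
  obtain ⟨r₁, c₁, -, hr₁, hcross₁⟩ :=
    exists_crossAt_of_westOf_of_westOf_of_le hfor h.ne h₀ hᵢ i.zero_le (by omega) hti
  obtain ⟨r₂, c₂, hr₂, hcross₂⟩ : ∃ r c, i ≤ r ∧ P.CrossAt t s (r, c) := by
    rcases westOf_or_westOf hfor h.ne' (r := w⁻¹ s) hle le_rfl with hts | hst
    · obtain ⟨c, hc⟩ := exists_crossAt_of_westOf_of_exit hfor hts rfl
      exact ⟨_, c, by omega, hc⟩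
    · obtain ⟨r, c, hr, -, hc⟩ :=
        exists_crossAt_of_westOf_of_westOf_of_le hfor h.ne' hᵢ hst (by omega) hle le_rfl
      exact ⟨r, c, hr, hc⟩
  have := congrArg Prod.fst (hred t s _ _ (P.crossAt_comm.mp hcross₁) hcross₂)
  simp only at this
  omega

end PipeDream

theorem stmt12_general (π w : Equiv.Perm ℕ) (l : ℕ → ℕ)
    (hl : Antitone l) (hsupp : (Function.support l).Finite)
    (hD : Rothe π = yd l) (hw : leL w π)
    (P : PipeDream) (hP : P ∈ PD w) (p : ℕ × ℕ) (hp : p ∉ P.cross)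
    (h : P.south p < P.west p) :
    p.1 < conjPart l (π (w⁻¹ (P.south p))) := by
  obtain ⟨hinv, hrow⟩ := P.mem_invSet_of_south_lt_west hP.1 hP.2 hp h
  exact hrow.trans_lt (lt_conjPart_of_mem_invSet hl hsupp hD (invSet_subset_of_leL hw hinv))

/-- if at a bump tile p of P ∈ PD(w) the pipe exiting south has
smaller label than the pipe exiting west, then p is π-dominated for any
dominant π ≥_L w. -/
theorem stmt12 (π w : Equiv.Perm ℕ) (l : ℕ → ℕ) (hπ : FinSupp π)
    (hdom : Avoids132 π) (hl : Antitone l) (hsupp : (Function.support l).Finite)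
    (hD : Rothe π = yd l) (hw : leL w π)
    (P : PipeDream) (hP : P ∈ PD w) (p : ℕ × ℕ) (hp : p ∉ P.cross)
    (h : P.south p < P.west p) :
    p.1 < conjPart l (π (w⁻¹ (P.south p))) :=
  stmt12_general π w l hl hsupp hD hw P hP p hp h
end
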